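/- arXiv:math/0511445 — 3 statements merged into one kernel-verified Lean document; each statement's English description precedes it below -/
import Mathlib

section
/- Let I be a finite set and x : I → ℝ a function taking pairwise distinct values (i.e., x is injective). Then ∑_{j∈I} ∑_{k∈I} ∑_{l∈I, l≠j} (x_j − x_k)/(x_j − x_l) = |I|²(|I|−1)/2, where |I| denotes the cardinality of I. -/
open Finset

theorem triple_sum_identity {ι : Type*} [DecidableEq ι] (I : Finset ι) (x : ι → ℝ)
    (hx : Set.InjOn x I) :
    ∑ j ∈ I, ∑ k ∈ I, ∑ l ∈ I.erase j, (x j - x k) / (x j - x l)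
      = (I.card : ℝ) ^ 2 * ((I.card : ℝ) - 1) / 2 := by
  set n : ℝ := (I.card : ℝ) with hn
  set g : ι → ℝ := fun j => ∑ k ∈ I, (x j - x k) with hg
  have key : ∀ j ∈ I, ∀ l ∈ I.erase j, x j - x l ≠ 0 := by
    intro j hj l hl h
    have hlI := mem_of_mem_erase hl
    have hne := (mem_erase.1 hl).1
    exact hne (hx hlI hj (by linarith))
  have step1 : ∑ j ∈ I, ∑ k ∈ I, ∑ l ∈ I.erase j, (x j - x k) / (x j - x l)
      = ∑ j ∈ I, ∑ l ∈ I.erase j, g j / (x j - x l) := by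
    refine Finset.sum_congr rfl fun j hj => ?_
    rw [Finset.sum_comm]
    exact Finset.sum_congr rfl fun l hl => by rw [hg, ← Finset.sum_div]
  set A : ℝ := ∑ j ∈ I, ∑ l ∈ I.erase j, g j / (x j - x l) with hA
  have symm : A = ∑ j ∈ I, ∑ l ∈ I.erase j, g l / (x l - x j) := by
    rw [hA, Finset.sum_comm' (s' := fun l => I.erase l) (t' := I)
      (by intro a b; simp only [mem_erase]; tauto)]
  have pair : ∀ j ∈ I, ∀ l ∈ I.erase j,
      g j / (x j - x l) + g l / (x l - x j) = n := by
    intro j hj l hl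
    have hd := key j hj l hl
    have hgl : g j - g l = n * (x j - x l) := by
      rw [hg]
      simp only []
      rw [← Finset.sum_sub_distrib]
      have : ∀ k ∈ I, (x j - x k) - (x l - x k) = x j - x l := fun k _ => by ring
      rw [Finset.sum_congr rfl this, Finset.sum_const, nsmul_eq_mul, hn]
    rw [show x l - x j = -(x j - x l) by ring, div_neg, ← sub_eq_add_neg, ← sub_div, hgl,
      mul_div_cancel_right₀ _ hd]
  have h2 : A + A = n * (n - 1) * n := by
    nth_rewrite 2 [symm]
    rw [hA, ← Finset.sum_add_distrib]
    have : ∀ j ∈ I, (∑ l ∈ I.erase j, g j / (x j - x l))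
        + ∑ l ∈ I.erase j, g l / (x l - x j)
        = (n - 1) * n := by
      intro j hj
      rw [← Finset.sum_add_distrib, Finset.sum_congr rfl (pair j hj),
        Finset.sum_const, nsmul_eq_mul, Finset.card_erase_of_mem hj, hn,
        Nat.cast_sub (Finset.card_pos.2 ⟨j, hj⟩), Nat.cast_one]
    rw [Finset.sum_congr rfl this, Finset.sum_const, nsmul_eq_mul, hn]
    ring
  rw [step1]
  show A = n ^ 2 * (n - 1) / 2
  nlinarith [h2]
end

section
/- Let I be a finite set and x : I → ℝ a function taking pairwise distinct values (i.e., x is injective). Then ∑_{j∈I} ∑_{k∈I} ∑_{l∈I, l≠j} (x_l − x_k)/(x_j − x_l) = −|I|²(|I|−1)/2, where |I| denotes the cardinality of I. -/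
open Finset

/-
Swapping `j` and `l` pairs each term `(x l - c) / (x j - x l)` with `(x j - c) / (x l - x j)`,
and the two add up to `-1`. Hence for each fixed `k` the double sum over ordered pairs `j ≠ l`
is `-|I|(|I| - 1) / 2`, and summing over `k` multiplies this by `|I|`.
-/

section OrderedPairs

variable {ι : Type*} [DecidableEq ι] (s : Finset ι)

theorem sum_sum_erase_comm {M : Type*} [AddCommMonoid M] (f : ι → ι → M) :
    ∑ j ∈ s, ∑ l ∈ s.erase j, f j l = ∑ j ∈ s, ∑ l ∈ s.erase j, f l j :=
  sum_comm' fun j l => by simp only [mem_erase]; tauto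

theorem sum_sum_erase_const {R : Type*} [Ring R] (c : R) :
    ∑ j ∈ s, ∑ _l ∈ s.erase j, c = #s * (#s - 1) * c := by
  have hinner : ∀ j ∈ s, ∑ _l ∈ s.erase j, c = (#s - 1) * c := fun j hj => by
    rw [sum_const, card_erase_of_mem hj, nsmul_eq_mul, Nat.cast_pred (card_pos.mpr ⟨j, hj⟩)]
  rw [sum_congr rfl hinner, sum_const, nsmul_eq_mul, mul_assoc]

theorem sub_div_sub_add_sub_div_sub_swap {K : Type*} [Field K] {a b : K} (hab : a ≠ b) (c : K) :
    (b - c) / (a - b) + (a - c) / (b - a) = -1 := by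
  rw [← neg_sub a b, div_neg, ← sub_eq_add_neg, ← sub_div, sub_sub_sub_cancel_right, ← neg_sub a b,
    neg_div, div_self (sub_ne_zero.mpr hab)]

theorem two_mul_sum_sum_erase_sub_div_sub {K : Type*} [Field K] {x : ι → K}
    (hx : Set.InjOn x s) (c : K) :
    2 * ∑ j ∈ s, ∑ l ∈ s.erase j, (x l - c) / (x j - x l) = -(#s * (#s - 1)) := by
  have hpair : ∀ j ∈ s, ∀ l ∈ s.erase j,
      (x l - c) / (x j - x l) + (x j - c) / (x l - x j) = -1 := fun j hj l hl =>
    sub_div_sub_add_sub_div_sub_swap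
      (fun h => ne_of_mem_erase hl (hx (mem_of_mem_erase hl) hj h.symm)) c
  calc 2 * ∑ j ∈ s, ∑ l ∈ s.erase j, (x l - c) / (x j - x l)
      = ∑ j ∈ s, ∑ l ∈ s.erase j, (x l - c) / (x j - x l)
        + ∑ j ∈ s, ∑ l ∈ s.erase j, (x j - c) / (x l - x j) := by
        rw [← sum_sum_erase_comm s fun j l => (x l - c) / (x j - x l), two_mul]
    _ = ∑ j ∈ s, ∑ _l ∈ s.erase j, (-1 : K) := by
        simp only [← sum_add_distrib]
        exact sum_congr rfl fun j hj => sum_congr rfl (hpair j hj)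
    _ = -(#s * (#s - 1)) := by rw [sum_sum_erase_const, mul_neg_one]

end OrderedPairs

theorem triple_sum_antisymmetric {ι : Type*} [DecidableEq ι] (I : Finset ι) (x : ι → ℝ)
    (hx : Set.InjOn x I) :
    ∑ j ∈ I, ∑ k ∈ I, ∑ l ∈ I.erase j, (x l - x k) / (x j - x l)
      = -((I.card : ℝ) ^ 2 * ((I.card : ℝ) - 1) / 2) := by
  have hk : ∀ k ∈ I, ∑ j ∈ I, ∑ l ∈ I.erase j, (x l - x k) / (x j - x l)
      = -((I.card : ℝ) * ((I.card : ℝ) - 1) / 2) := fun k _ => by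
    linarith [two_mul_sum_sum_erase_sub_div_sub I hx (x k)]
  rw [sum_comm, sum_congr rfl hk, sum_const, nsmul_eq_mul]
  ring
end

section
/- Let N ≥ 2 and x : {1, …, N} → ℝ satisfy x_1 ≤ x_2 ≤ ⋯ ≤ x_N ≤ x_1 + 2π and ∑_{j=1}^N ∑_{k=1}^N sin²((x_j − x_k)/2) < 1/2. Then there exists y : {1, …, N} → ℝ such that for every j, either y_j = x_j or y_j = x_j − 2π, and |y_j − y_k| < π/3 for all j, k. -/
open Finset Real

lemma cos_gt_half_dichotomy (d : ℝ) (h0 : 0 ≤ d) (h2 : d ≤ 2 * π)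
    (hc : 1 / 2 < Real.cos d) : d < π / 3 ∨ 2 * π - π / 3 < d := by
  by_contra h
  push_neg at h
  obtain ⟨h1, h2'⟩ := h
  have hpi := Real.pi_pos
  have hcos : Real.cos d ≤ 1 / 2 := by
    rcases le_or_gt d π with hd | hd
    · calc Real.cos d ≤ Real.cos (π / 3) :=
            Real.cos_le_cos_of_nonneg_of_le_pi (by positivity) hd h1
        _ = 1 / 2 := Real.cos_pi_div_three
    · have heq : Real.cos d = Real.cos (2 * π - d) := by
        rw [show (2 * π - d) = -(d - 2 * π) by ring, Real.cos_neg, Real.cos_sub_two_pi]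
      rw [heq]
      calc Real.cos (2 * π - d) ≤ Real.cos (π / 3) :=
            Real.cos_le_cos_of_nonneg_of_le_pi (by positivity) (by linarith) (by linarith)
        _ = 1 / 2 := Real.cos_pi_div_three
  linarith

theorem change_of_variables_on_circle (N : ℕ) (hN : 2 ≤ N) (x : ℕ → ℝ)
    (hmono : ∀ i j, 1 ≤ i → i ≤ j → j ≤ N → x i ≤ x j)
    (hwrap : x N ≤ x 1 + 2 * π)
    (hR : ∑ j ∈ Finset.Icc 1 N, ∑ k ∈ Finset.Icc 1 N,
        Real.sin ((x j - x k) / 2) ^ 2 < 1 / 2) :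
    ∃ y : ℕ → ℝ,
      (∀ j ∈ Finset.Icc 1 N, y j = x j ∨ y j = x j - 2 * π) ∧
      (∀ j ∈ Finset.Icc 1 N, ∀ k ∈ Finset.Icc 1 N, |y j - y k| < π / 3) := by
  have hpi := Real.pi_pos
  -- Each pairwise term is < 1/4
  have hterm : ∀ j ∈ Finset.Icc 1 N, ∀ k ∈ Finset.Icc 1 N,
      Real.sin ((x j - x k) / 2) ^ 2 < 1 / 4 := by
    intro j hj k hk
    rcases eq_or_ne j k with rfl | hjk
    · simp
    · set F : ℕ → ℝ := fun a => ∑ b ∈ Finset.Icc 1 N, Real.sin ((x a - x b) / 2) ^ 2 with hF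
      have hFnonneg : ∀ a ∈ Finset.Icc 1 N, 0 ≤ F a := by
        intro a _
        exact Finset.sum_nonneg fun b _ => sq_nonneg _
      have hFj : Real.sin ((x j - x k) / 2) ^ 2 ≤ F j :=
        Finset.single_le_sum (f := fun b => Real.sin ((x j - x b) / 2) ^ 2)
          (fun b _ => sq_nonneg _) hk
      have hFk : Real.sin ((x k - x j) / 2) ^ 2 ≤ F k :=
        Finset.single_le_sum (f := fun b => Real.sin ((x k - x b) / 2) ^ 2)
          (fun b _ => sq_nonneg _) hj
      have hsub : ({j, k} : Finset ℕ) ⊆ Finset.Icc 1 N := by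
        intro a ha
        simp only [Finset.mem_insert, Finset.mem_singleton] at ha
        rcases ha with rfl | rfl <;> assumption
      have hsum2 : F j + F k ≤ ∑ a ∈ Finset.Icc 1 N, F a := by
        have := Finset.sum_le_sum_of_subset_of_nonneg hsub
          (fun a ha _ => hFnonneg a ha)
        rwa [Finset.sum_pair hjk] at this
      have hsym : Real.sin ((x k - x j) / 2) ^ 2 = Real.sin ((x j - x k) / 2) ^ 2 := by
        rw [show (x k - x j) / 2 = -((x j - x k) / 2) by ring, Real.sin_neg, neg_sq]
      have : 2 * Real.sin ((x j - x k) / 2) ^ 2 < 1 / 2 := by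
        calc 2 * Real.sin ((x j - x k) / 2) ^ 2
            = Real.sin ((x j - x k) / 2) ^ 2 + Real.sin ((x k - x j) / 2) ^ 2 := by
              rw [hsym]; ring
          _ ≤ F j + F k := add_le_add hFj hFk
          _ ≤ ∑ a ∈ Finset.Icc 1 N, F a := hsum2
          _ < 1 / 2 := hR
      linarith
  -- hence cos of each difference > 1/2
  have hcos : ∀ j ∈ Finset.Icc 1 N, ∀ k ∈ Finset.Icc 1 N,
      1 / 2 < Real.cos (x j - x k) := by
    intro j hj k hk
    have h := hterm j hj k hk
    have hs : Real.sin ((x j - x k) / 2) ^ 2 = 1 / 2 - Real.cos (x j - x k) / 2 := by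
      rw [Real.sin_sq_eq_half_sub]
      ring_nf
    rw [hs] at h
    linarith
  -- basic range facts
  have hmem : ∀ j ∈ Finset.Icc 1 N, 1 ≤ j ∧ j ≤ N := by
    intro j hj; exact Finset.mem_Icc.mp hj
  have hlow : ∀ j ∈ Finset.Icc 1 N, x 1 ≤ x j := by
    intro j hj
    obtain ⟨h1, h2⟩ := hmem j hj
    exact hmono 1 j le_rfl h1 h2
  have hhigh : ∀ j ∈ Finset.Icc 1 N, x j ≤ x 1 + 2 * π := by
    intro j hj
    obtain ⟨h1, h2⟩ := hmem j hj
    exact le_trans (hmono j N h1 h2 le_rfl) hwrap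
  have h1mem : (1 : ℕ) ∈ Finset.Icc 1 N := Finset.mem_Icc.mpr ⟨le_rfl, by omega⟩
  -- dichotomy for each point relative to x 1
  have hdich : ∀ j ∈ Finset.Icc 1 N,
      x j - x 1 < π / 3 ∨ 2 * π - π / 3 < x j - x 1 := by
    intro j hj
    apply cos_gt_half_dichotomy _ (by linarith [hlow j hj]) (by linarith [hhigh j hj])
    exact hcos j hj 1 h1mem
  refine ⟨fun j => if x j - x 1 < π / 3 then x j else x j - 2 * π, ?_, ?_⟩
  · intro j _
    by_cases h : x j - x 1 < π / 3 <;> simp [h]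
  · intro j hj k hk
    -- difference dichotomy for the pair
    have hfar : ∀ a ∈ Finset.Icc 1 N, ¬ (x a - x 1 < π / 3) →
        2 * π - π / 3 < x a - x 1 := by
      intro a ha hna
      rcases hdich a ha with h | h
      · exact absurd h hna
      · exact h
    by_cases hjc : x j - x 1 < π / 3 <;> by_cases hkc : x k - x 1 < π / 3 <;>
      simp only [hjc, hkc, if_true, if_false, if_pos, if_neg, not_false_iff]
    · -- both close
      rw [abs_sub_lt_iff]
      constructor <;> linarith [hlow j hj, hlow k hk]
    · -- j close, k far
      have hkf := hfar k hk hkc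
      have hd : 2 * π - π / 3 < x k - x j := by
        have : 1 / 2 < Real.cos (x k - x j) := hcos k hk j hj
        rcases cos_gt_half_dichotomy (x k - x j)
          (by linarith) (by linarith [hhigh k hk, hlow j hj]) this with h | h
        · linarith
        · exact h
      rw [abs_sub_lt_iff]
      constructor <;> linarith [hhigh k hk, hlow j hj]
    · -- j far, k close
      have hjf := hfar j hj hjc
      have hd : 2 * π - π / 3 < x j - x k := by
        have : 1 / 2 < Real.cos (x j - x k) := hcos j hj k hk
        rcases cos_gt_half_dichotomy (x j - x k)
          (by linarith) (by linarith [hhigh j hj, hlow k hk]) this with h | h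
        · linarith
        · exact h
      rw [abs_sub_lt_iff]
      constructor <;> linarith [hhigh j hj, hlow k hk]
    · -- both far
      have hjf := hfar j hj hjc
      have hkf := hfar k hk hkc
      rw [abs_sub_lt_iff]
      constructor <;> linarith [hhigh j hj, hhigh k hk]
end
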